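/- arXiv:2203.15735 — 4 statements merged into one kernel-verified Lean document; each statement's English description precedes it below -/
import Mathlib

section
/- Let L be the abelian group with generators x₁, x₂, x₃ and relations 2x₁ = 3x₂ = (u+1)x₃ for an integer u ≥ 1, with c = 2x₁ and ω = c − (x₁+x₂+x₃). For integers a, b with 1 ≤ b ≤ 2u+1, one has a·x₁ − b·ω = x₂ in L if and only if 3 divides u, a = (u−3)/3, and b = u+1. -/
/-- The abelian group `L(2,3,u+1)` presented by generators `x₁, x₂, x₃`
and relations `2x₁ = 3x₂ = (u+1)x₃`. -/
abbrev Lgrp (u : ℤ) : Type :=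
  (ℤ × ℤ × ℤ) ⧸
    AddSubgroup.closure ({((2, -3, 0) : ℤ × ℤ × ℤ), ((0, 3, -(u + 1)) : ℤ × ℤ × ℤ)} :
      Set (ℤ × ℤ × ℤ))

def Lx1 (u : ℤ) : Lgrp u := QuotientAddGroup.mk ((1, 0, 0) : ℤ × ℤ × ℤ)
def Lx2 (u : ℤ) : Lgrp u := QuotientAddGroup.mk ((0, 1, 0) : ℤ × ℤ × ℤ)
def Lx3 (u : ℤ) : Lgrp u := QuotientAddGroup.mk ((0, 0, 1) : ℤ × ℤ × ℤ)

/-- The canonical element `c = 2x₁`. -/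
def Lc (u : ℤ) : Lgrp u := (2 : ℤ) • Lx1 u

/-- The dualizing element `ω = c − (x₁ + x₂ + x₃)`. -/
def Lom (u : ℤ) : Lgrp u := Lc u - (Lx1 u + Lx2 u + Lx3 u)

/-! In coordinates `a • x₁ - b • ω - x₂` is the class of `(a - b, b - 1, b)`, which vanishes iff
it equals `m • (2, -3, 0) + n • (0, 3, -(u + 1))`. The last coordinate gives `b = -n (u + 1)`, and
`1 ≤ b ≤ 2u + 1 < 2 (u + 1)` forces `n = -1`, `b = u + 1`; the other two coordinates then give
`u = -3 (m + 1)` and `3a = u - 3`. -/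

theorem Lgrp.mk_eq_zero_iff (u : ℤ) (v : ℤ × ℤ × ℤ) :
    (QuotientAddGroup.mk v : Lgrp u) = 0 ↔
      ∃ m n : ℤ, v.1 = 2 * m ∧ v.2.1 = 3 * n - 3 * m ∧ v.2.2 = -(n * (u + 1)) := by
  rw [QuotientAddGroup.eq_zero_iff, AddSubgroup.mem_closure_pair]
  refine exists₂_congr fun m n => ?_
  simp only [Prod.ext_iff, Prod.fst_add, Prod.snd_add, Prod.smul_fst, Prod.smul_snd, smul_eq_mul]
  constructor <;> rintro ⟨h₁, h₂, h₃⟩ <;> refine ⟨?_, ?_, ?_⟩ <;> linarith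

theorem smul_Lx1_sub_smul_Lom (u a b : ℤ) :
    a • Lx1 u - b • Lom u = QuotientAddGroup.mk ((a - b, b, b) : ℤ × ℤ × ℤ) := by
  simp only [Lom, Lc, Lx1, Lx2, Lx3, ← QuotientAddGroup.mk_zsmul, ← QuotientAddGroup.mk_add,
    ← QuotientAddGroup.mk_sub]
  congr 1
  simp only [Prod.ext_iff, Prod.fst_sub, Prod.snd_sub, Prod.fst_add, Prod.snd_add,
    Prod.smul_fst, Prod.smul_snd, smul_eq_mul]
  refine ⟨?_, ?_, ?_⟩ <;> ring

theorem Int.eq_one_of_eq_mul_of_pos_of_lt_two_mul {b n k : ℤ} (h : b = n * k) (hb : 0 < b)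
    (hbk : b < 2 * k) : n = 1 := by
  have hk : 0 < k := by linarith
  have hn₀ : 0 < n := pos_of_mul_pos_left (h ▸ hb) hk.le
  have hn₂ : n < 2 := lt_of_mul_lt_mul_right (h ▸ hbk) hk.le
  omega

theorem stmt5_general (u a b : ℤ) (hb1 : 1 ≤ b) (hb2 : b ≤ 2 * u + 1) :
    a • Lx1 u - b • Lom u = Lx2 u ↔ (3 ∣ u ∧ 3 * a = u - 3 ∧ b = u + 1) := by
  rw [← sub_eq_zero, smul_Lx1_sub_smul_Lom, Lx2, ← QuotientAddGroup.mk_sub, Lgrp.mk_eq_zero_iff]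
  simp only [Prod.fst_sub, Prod.snd_sub, sub_zero]
  constructor
  · rintro ⟨m, n, h₁, h₂, h₃⟩
    have hn : -n = 1 := Int.eq_one_of_eq_mul_of_pos_of_lt_two_mul (b := b) (k := u + 1)
      (by rw [h₃]; ring) (by omega) (by omega)
    obtain rfl : n = -1 := by omega
    exact ⟨⟨-m - 1, by omega⟩, by omega, by omega⟩
  · rintro ⟨⟨k, hk⟩, ha, hb⟩
    exact ⟨-k - 1, -1, by omega, by omega, by omega⟩

theorem stmt5 (u a b : ℤ) (hu : 1 ≤ u) (hb1 : 1 ≤ b) (hb2 : b ≤ 2 * u + 1) :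
    a • Lx1 u - b • Lom u = Lx2 u ↔ (3 ∣ u ∧ 3 * a = u - 3 ∧ b = u + 1) :=
  stmt5_general u a b hb1 hb2
end

section
/- Let L be the abelian group with generators x₁, x₂, x₃ and relations 2x₁ = 3x₂ = (u+1)x₃ for an integer u ≥ 1, with c = 2x₁ and ω = c − (x₁+x₂+x₃). For integers a, b with 1 ≤ b ≤ 2u+1, one has a·x₁ − b·ω = x₃ in L if and only if 3 divides u+2, a = (u−4)/3, and b = u+2. -/
theorem stmt6 (u a b : ℤ) (hu : 1 ≤ u) (hb1 : 1 ≤ b) (hb2 : b ≤ 2 * u + 1) :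
    a • Lx1 u - b • Lom u = Lx3 u ↔ (3 ∣ (u + 2) ∧ 3 * a = u - 4 ∧ b = u + 2) := by
  have h : a • Lx1 u - b • Lom u = QuotientAddGroup.mk ((a - b, b, b) : ℤ × ℤ × ℤ) := by
    simp only [Lx1, Lx2, Lx3, Lc, Lom, ← QuotientAddGroup.mk_zsmul, ← QuotientAddGroup.mk_add,
      ← QuotientAddGroup.mk_sub]
    congr 1
    simp [Prod.ext_iff]
  rw [h, Lx3, QuotientAddGroup.eq, AddSubgroup.mem_closure_pair]
  constructor
  · rintro ⟨m, n, hmn⟩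
    simp [Prod.ext_iff] at hmn
    obtain ⟨h1, h2, h3⟩ := hmn
    have h3' : (u + 1) * n = b - 1 := by linarith [h3]
    have hn : n = 0 ∨ n = 1 := by
      rcases lt_trichotomy n 0 with h | h | h
      · nlinarith
      · left; exact h
      · right; nlinarith
    rcases hn with rfl | rfl
    · omega
    · exact ⟨⟨m - 1, by omega⟩, by omega, by omega⟩
  · rintro ⟨⟨k, hk⟩, ha, hb⟩
    refine ⟨k + 1, 1, ?_⟩
    simp [Prod.ext_iff]
    omega
end

section
/- For u ≡ 0 (mod 3), writing u = 3i, the rational function identity (λ+1)(λ^{3u+3} − (−1)^{u+1}) / ((λ³+1)(λ^{u+1} − (−1)^{u+1})) = −(λ+1)·∑_{j=0}^{i−1}(−λ)^{3i+2+3j} + (−λ)^{3i} + (λ+1)·∑_{j=0}^{i−1}(−λ)^{3j} holds; in particular the left side is a polynomial of degree 2u. -/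
open Polynomial Finset

private lemma aux1 {R : Type*} [CommRing R] (x a e s : R) (he : e * e = 1)
    (hs : s * (x ^ 3 + 1) = 1 - e * a) :
    (x ^ 3 + 1) * (-((x + 1) * (e * a * x ^ 2 * s)) + e * a + (x + 1) * s)
      = (x + 1) * (a ^ 2 * x ^ 2 - e * (a * x) + 1) := by
  linear_combination ((x + 1) * (1 - e * a * x ^ 2)) * hs + ((x + 1) * a ^ 2 * x ^ 2) * he

private lemma aux2 {R : Type*} [CommRing R] (x a e p : R) (he : e * e = 1)
    (hq : (x ^ 3 + 1) * p = (x + 1) * (a ^ 2 * x ^ 2 - e * (a * x) + 1)) :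
    (x + 1) * (a ^ 3 * x ^ 3 + e) = p * ((x ^ 3 + 1) * (a * x + e)) := by
  linear_combination ((x + 1) * a * x) * he - (a * x + e) * hq

theorem stmt9 (u i : ℕ) (hi : 1 ≤ i) (hu : u = 3 * i)
    (P : Polynomial ℚ)
    (hP : P = -((X + 1) * ∑ j ∈ Finset.range i, (-X : Polynomial ℚ) ^ (3 * i + 2 + 3 * j)) +
        (-X) ^ (3 * i) + (X + 1) * ∑ j ∈ Finset.range i, (-X : Polynomial ℚ) ^ (3 * j)) :
    ((RatFunc.X + 1) * (RatFunc.X ^ (3 * u + 3) - (-1 : RatFunc ℚ) ^ (u + 1))) /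
        ((RatFunc.X ^ 3 + 1) * (RatFunc.X ^ (u + 1) - (-1 : RatFunc ℚ) ^ (u + 1))) =
      algebraMap (Polynomial ℚ) (RatFunc ℚ) P ∧ P.natDegree = 2 * u := by
  subst hu
  have he2 : ((-1 : ℚ[X]) ^ i) * ((-1 : ℚ[X]) ^ i) = 1 := by
    rw [← pow_add, ← two_mul, pow_mul]; norm_num
  have hneg : ∀ m : ℕ, (-X : ℚ[X]) ^ (3 * m) = ((-1 : ℚ[X]) ^ m) * X ^ (3 * m) := by
    intro m
    rw [neg_pow, pow_mul]
    norm_num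
  have hS : (∑ j ∈ Finset.range i, (-X : ℚ[X]) ^ (3 * j)) * (X ^ 3 + 1)
      = 1 - ((-1 : ℚ[X]) ^ i) * X ^ (3 * i) := by
    have h := geom_sum_mul ((-X : ℚ[X]) ^ 3) i
    simp_rw [← pow_mul] at h
    linear_combination -h - hneg i
  have hQ : (X ^ 3 + 1) * P
      = (X + 1) * ((X ^ (3 * i)) ^ 2 * X ^ 2 - ((-1 : ℚ[X]) ^ i) * (X ^ (3 * i) * X) + 1) := by
    have hterm : ∀ j : ℕ, (-X : ℚ[X]) ^ (3 * i + 2 + 3 * j)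
        = ((-1 : ℚ[X]) ^ i) * X ^ (3 * i) * X ^ 2 * (-X) ^ (3 * j) := by
      intro j
      rw [pow_add, pow_add, hneg i]
      ring
    rw [hP]
    simp_rw [hterm]
    rw [← Finset.mul_sum, hneg i]
    exact aux1 X (X ^ (3 * i)) ((-1 : ℚ[X]) ^ i) _ he2 hS
  have hsign : ((-1 : ℚ[X]) ^ (3 * i + 1)) = -((-1 : ℚ[X]) ^ i) := by
    rw [pow_succ, pow_mul]; norm_num
  have hA := aux2 X (X ^ (3 * i)) ((-1 : ℚ[X]) ^ i) P he2 hQ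
  have hMain : (X + 1) * (X ^ (3 * (3 * i) + 3) - (-1 : ℚ[X]) ^ (3 * i + 1))
      = P * ((X ^ 3 + 1) * (X ^ (3 * i + 1) - (-1 : ℚ[X]) ^ (3 * i + 1))) := by
    linear_combination hA - (X + 1) * hsign + P * (X ^ 3 + 1) * hsign
  have hB1 : (X ^ 3 + 1 : ℚ[X]) ≠ 0 := fun h => by
    simpa using congrArg (Polynomial.eval 1) h
  have hB2 : (X ^ (3 * i + 1) - (-1 : ℚ[X]) ^ (3 * i + 1)) ≠ 0 := by
    rw [show ((-1 : ℚ[X]) ^ (3 * i + 1)) = C ((-1 : ℚ) ^ (3 * i + 1)) from by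
      rw [map_pow, map_neg, map_one]]
    exact Polynomial.X_pow_sub_C_ne_zero (by omega) _
  -- degree computation
  have hC : ((-1 : ℚ[X]) ^ i) = C ((-1 : ℚ) ^ i) := by rw [map_pow, map_neg, map_one]
  have hQC : (X ^ 3 + 1) * P
      = (X + 1) * (X ^ (6 * i + 2) - C ((-1 : ℚ) ^ i) * X ^ (3 * i + 1) + 1) := by
    rw [hQ, hC, ← pow_succ, ← pow_mul, ← pow_add, show 3 * i * 2 + 2 = 6 * i + 2 from by ring]
  have hdeg : ((X + 1) * (X ^ (6 * i + 2) - C ((-1 : ℚ) ^ i) * X ^ (3 * i + 1) + 1)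
      : ℚ[X]).natDegree = 6 * i + 3 := by
    compute_degree!
    all_goals first
      | omega
      | (refine ⟨by omega, ?_⟩
         rw [if_pos (by omega : 3 * i ≤ 6 * i + 1), if_neg (by omega : ¬ 6 * i + 2 ≤ 3 * i + 1)]
         norm_num)
  have hP0 : P ≠ 0 := by
    intro h
    rw [h, mul_zero] at hQC
    rw [← hQC] at hdeg
    simp at hdeg
  constructor
  · have hAmap : (RatFunc.X + 1) * (RatFunc.X ^ (3 * (3 * i) + 3) - (-1 : RatFunc ℚ) ^ (3 * i + 1))
        = algebraMap (Polynomial ℚ) (RatFunc ℚ)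
          ((X + 1) * (X ^ (3 * (3 * i) + 3) - (-1 : ℚ[X]) ^ (3 * i + 1))) := by
      simp [map_mul, map_add, map_sub, map_pow, map_one, map_neg, RatFunc.algebraMap_X]
    have hBmap : (RatFunc.X ^ 3 + 1) * (RatFunc.X ^ (3 * i + 1) - (-1 : RatFunc ℚ) ^ (3 * i + 1))
        = algebraMap (Polynomial ℚ) (RatFunc ℚ)
          ((X ^ 3 + 1) * (X ^ (3 * i + 1) - (-1 : ℚ[X]) ^ (3 * i + 1))) := by
      simp [map_mul, map_add, map_sub, map_pow, map_one, map_neg, RatFunc.algebraMap_X]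
    rw [hAmap, hBmap, div_eq_iff (RatFunc.algebraMap_ne_zero (mul_ne_zero hB1 hB2)), ← map_mul]
    exact congrArg _ hMain
  · have hnm := Polynomial.natDegree_mul hB1 hP0
    rw [hQC, hdeg] at hnm
    have h3 : (X ^ 3 + 1 : ℚ[X]).natDegree = 3 := by compute_degree!
    rw [h3] at hnm
    omega
end

section
/- For integers n, r with 2r ≥ n+3 and n−r ≡ 0 (mod 3), the expression (λ+1)·(λ^{n+2} + (−1)^{n−r}·∑_{j=0}^{2r−n−2} λ^{n−r+2+j} + 1) is divisible by λ³+1 in ℤ[λ], and the quotient is a monic polynomial of degree n. -/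
open Polynomial Finset

private lemma pow3aux (t : ℕ) :
    ∃ d : ℤ[X], ((X : ℤ[X]) ^ 3 + 1) * d = X ^ (3 * t) - C ((-1 : ℤ) ^ t) := by
  induction t with
  | zero => exact ⟨0, by simp⟩
  | succ t ih =>
    obtain ⟨d, hd⟩ := ih
    refine ⟨X ^ 3 * d + C ((-1 : ℤ) ^ t), ?_⟩
    have h1 : (3 * (t + 1)) = 3 * t + 3 := by ring
    have h2 : C ((-1 : ℤ) ^ (t + 1)) = - C ((-1 : ℤ) ^ t) := by
      rw [pow_succ, map_mul]; simp
    rw [h1, pow_add, h2]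
    linear_combination (X : ℤ[X]) ^ 3 * hd

private lemma geoaux (u : ℕ) :
    ((X : ℤ[X]) ^ 2 - X + 1) * ∑ i ∈ Finset.range (u + 4), X ^ i =
      X ^ (u + 5) + (∑ j ∈ Finset.range (u + 2), X ^ (2 + j)) + 1 := by
  induction u with
  | zero =>
    simp [Finset.sum_range_succ]
    ring
  | succ u ih =>
    rw [show u + 1 + 4 = (u + 4) + 1 from rfl,
      Finset.sum_range_succ (fun i => (X : ℤ[X]) ^ i) (u + 4),
      show u + 1 + 2 = (u + 2) + 1 from rfl,
      Finset.sum_range_succ (fun j => (X : ℤ[X]) ^ (2 + j)) (u + 2),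
      show 2 + (u + 2) = u + 4 from by omega,
      show u + 1 + 5 = u + 5 + 1 from by omega]
    linear_combination ih

/-- For `r ≤ n−1`, `2r ≥ n+3` and `3 ∣ (n−r)`, the polynomial
`(λ+1)(λ^{n+2} + (−1)^{n−r}·∑_{j=0}^{2r−n−2} λ^{n−r+2+j} + 1)` is divisible by `λ³+1`
in `ℤ[λ]`, with monic quotient of degree `n`. -/
theorem stmt19 (n r : ℕ) (h0 : r ≤ n - 1) (h1 : n + 3 ≤ 2 * r) (h2 : (n - r) % 3 = 0) :
    ∃ p : ℤ[X],
      ((X : ℤ[X]) ^ 3 + 1) * p =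
          (X + 1) * ((X : ℤ[X]) ^ (n + 2) +
            C ((-1 : ℤ) ^ (n - r)) * ∑ j ∈ Finset.range (2 * r - n - 1), (X : ℤ[X]) ^ (n - r + 2 + j) +
            1) ∧
        p.Monic ∧ p.natDegree = n := by
  -- basic arithmetic setup
  have hrn : r ≤ n := by omega
  obtain ⟨t, ht⟩ : ∃ t, n - r = 3 * t := ⟨(n - r) / 3, by omega⟩
  obtain ⟨u, hu⟩ : ∃ u, r = 3 * t + 3 + u := ⟨r - (3 * t + 3), by omega⟩
  have hn : n = 6 * t + 3 + u := by omega
  have e3 : 2 * r - n - 1 = u + 2 := by omega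
  rw [ht, e3, show ((-1 : ℤ) ^ (3 * t)) = (-1) ^ t from by rw [pow_mul]; norm_num]
  obtain ⟨d, hd⟩ := pow3aux t
  have hgeo := geoaux u
  have hee : C ((-1 : ℤ) ^ t) * C ((-1 : ℤ) ^ t) = (1 : ℤ[X]) := by
    rw [← C_mul, ← pow_add, ← two_mul, pow_mul]; norm_num
  -- the quotient polynomial
  set p : ℤ[X] := (X + 1) * d *
      (X ^ (3 * t) * X ^ (u + 5) +
        C ((-1 : ℤ) ^ t) * (X ^ (u + 5) + ∑ j ∈ Finset.range (u + 2), (X : ℤ[X]) ^ (2 + j))) +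
      ∑ i ∈ Finset.range (u + 4), (X : ℤ[X]) ^ i with hp
  -- sum splitting
  have hS : (∑ j ∈ Finset.range (u + 2), (X : ℤ[X]) ^ (3 * t + 2 + j)) =
      X ^ (3 * t) * ∑ j ∈ Finset.range (u + 2), (X : ℤ[X]) ^ (2 + j) := by
    rw [Finset.mul_sum]
    refine Finset.sum_congr rfl fun j _ => ?_
    rw [← pow_add]
    congr 1
    omega
  have hXn : (X : ℤ[X]) ^ (n + 2) = X ^ (3 * t) * (X ^ (3 * t) * X ^ (u + 5)) := by
    rw [← pow_add, ← pow_add]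
    congr 1
    omega
  -- the key factorization (X^2 - X + 1) * p = F
  have hqp : ((X : ℤ[X]) ^ 2 - X + 1) * p =
      (X : ℤ[X]) ^ (n + 2) +
        C ((-1 : ℤ) ^ t) * ∑ j ∈ Finset.range (u + 2), (X : ℤ[X]) ^ (3 * t + 2 + j) + 1 := by
    rw [hS, hXn, hp]
    linear_combination
      (X ^ (3 * t) * X ^ (u + 5) +
          C ((-1 : ℤ) ^ t) * (X ^ (u + 5) + ∑ j ∈ Finset.range (u + 2), (X : ℤ[X]) ^ (2 + j))) * hd
        + hgeo
        - (X ^ (u + 5) + ∑ j ∈ Finset.range (u + 2), (X : ℤ[X]) ^ (2 + j)) * hee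
  -- degree bounds
  have hSdegN : ∀ j, j < u + 2 → 3 * t + 2 + j ≤ 3 * t + u + 3 := by omega
  have hSdeg : (∑ j ∈ Finset.range (u + 2), (X : ℤ[X]) ^ (3 * t + 2 + j)).degree
      ≤ ((3 * t + u + 3 : ℕ) : WithBot ℕ) := by
    refine (Polynomial.degree_sum_le _ _).trans (Finset.sup_le fun j hj => ?_)
    rw [Polynomial.degree_X_pow]
    have h := hSdegN j (Finset.mem_range.mp hj)
    exact_mod_cast h
  have hCS : (C ((-1 : ℤ) ^ t) * ∑ j ∈ Finset.range (u + 2),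
      (X : ℤ[X]) ^ (3 * t + 2 + j)).degree ≤ ((3 * t + u + 3 : ℕ) : WithBot ℕ) := by
    refine (Polynomial.degree_mul_le _ _).trans ?_
    calc (C ((-1 : ℤ) ^ t)).degree + _ ≤ 0 + ((3 * t + u + 3 : ℕ) : WithBot ℕ) :=
        add_le_add Polynomial.degree_C_le hSdeg
      _ = ((3 * t + u + 3 : ℕ) : WithBot ℕ) := zero_add _
  have hCS1 : (C ((-1 : ℤ) ^ t) * (∑ j ∈ Finset.range (u + 2),
      (X : ℤ[X]) ^ (3 * t + 2 + j)) + 1).degree ≤ ((3 * t + u + 3 : ℕ) : WithBot ℕ) := by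
    refine (Polynomial.degree_add_le _ _).trans (max_le hCS
      (Polynomial.degree_one_le.trans ?_))
    exact_mod_cast Nat.zero_le _
  have hGdeg : (C ((-1 : ℤ) ^ t) * (∑ j ∈ Finset.range (u + 2),
      (X : ℤ[X]) ^ (3 * t + 2 + j)) + 1).degree < ((n + 2 : ℕ) : WithBot ℕ) :=
    lt_of_le_of_lt hCS1 (by exact_mod_cast (by omega : 3 * t + u + 3 < n + 2))
  have hFmonic : ((X : ℤ[X]) ^ (n + 2) + C ((-1 : ℤ) ^ t) * (∑ j ∈ Finset.range (u + 2),
      (X : ℤ[X]) ^ (3 * t + 2 + j)) + 1).Monic := by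
    rw [add_assoc]
    exact Polynomial.monic_X_pow_add hGdeg
  have hFdeg : ((X : ℤ[X]) ^ (n + 2) + C ((-1 : ℤ) ^ t) * (∑ j ∈ Finset.range (u + 2),
      (X : ℤ[X]) ^ (3 * t + 2 + j)) + 1).degree = ((n + 2 : ℕ) : WithBot ℕ) := by
    rw [add_assoc, Polynomial.degree_add_eq_left_of_degree_lt, Polynomial.degree_X_pow]
    rw [Polynomial.degree_X_pow]
    exact hGdeg
  have hqmonic : ((X : ℤ[X]) ^ 2 - X + 1).Monic := by monicity!
  have hpmonic : p.Monic := hqmonic.of_mul_monic_left (by rw [hqp]; exact hFmonic)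
  refine ⟨p, ?_, hpmonic, ?_⟩
  · calc ((X : ℤ[X]) ^ 3 + 1) * p = (X + 1) * (((X : ℤ[X]) ^ 2 - X + 1) * p) := by ring
      _ = _ := by rw [hqp]
  · -- degree of p
    have hqdeg : ((X : ℤ[X]) ^ 2 - X + 1).natDegree = 2 := by compute_degree!
    have hmul := hqmonic.natDegree_mul hpmonic
    rw [hqp] at hmul
    have hFnd : ((X : ℤ[X]) ^ (n + 2) + C ((-1 : ℤ) ^ t) * (∑ j ∈ Finset.range (u + 2),
        (X : ℤ[X]) ^ (3 * t + 2 + j)) + 1).natDegree = n + 2 :=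
      Polynomial.natDegree_eq_of_degree_eq_some hFdeg
    omega
end
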